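/- arXiv:0911.2863 — 2 statements merged into one kernel-verified Lean document; each statement's English description precedes it below -/
import Mathlib

section
/- A filter F in an inverse monoid contains an idempotent if and only if F is an inverse subsemigroup (closed under products and inverses). -/
section Defs
variable {S : Type*}

/-- An idempotent element. -/
def IsIdem [Mul S] (e : S) : Prop := e * e = e

/-- The natural partial order on an inverse semigroup: `s ≤ t` iff `s = t * e`
for some idempotent `e`. -/
def nle [Mul S] (s t : S) : Prop := ∃ e : S, IsIdem e ∧ s = t * e

/-- `m` is the meet (greatest lower bound) of `s` and `t` for the natural partial order. -/
def IsMeet [Mul S] (s t m : S) : Prop :=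
  nle m s ∧ nle m t ∧ ∀ u : S, nle u s → nle u t → nle u m

/-- `j` is the join (least upper bound) of `s` and `t` for the natural partial order. -/
def IsJoin [Mul S] (s t j : S) : Prop :=
  nle s j ∧ nle t j ∧ ∀ u : S, nle s u → nle t u → nle j u

/-- Compatible elements: `s⁻¹ * t` and `s * t⁻¹` are idempotents. -/
def Compatible [Mul S] [Inv S] (s t : S) : Prop :=
  IsIdem (s⁻¹ * t) ∧ IsIdem (s * t⁻¹)

/-- Orthogonal elements: `s⁻¹ * t = 0` and `s * t⁻¹ = 0`. -/
def Orthogonal [Mul S] [Inv S] [Zero S] (s t : S) : Prop :=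
  s⁻¹ * t = 0 ∧ s * t⁻¹ = 0

/-- A filter: a nonempty, upwardly closed, down-directed subset. -/
def IsFilter' [Mul S] (F : Set S) : Prop :=
  F.Nonempty ∧ (∀ s t : S, s ∈ F → nle s t → t ∈ F) ∧
    (∀ s t : S, s ∈ F → t ∈ F → ∃ u ∈ F, nle u s ∧ nle u t)

/-- A proper filter: a filter not containing `0`. -/
def IsProperFilter [Mul S] [Zero S] (F : Set S) : Prop :=
  IsFilter' F ∧ (0 : S) ∉ F

/-- An ultrafilter: a proper filter maximal among proper filters. -/
def IsUltrafilter' [Mul S] [Zero S] (F : Set S) : Prop :=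
  IsProperFilter F ∧ ∀ G : Set S, IsProperFilter G → F ⊆ G → G = F

/-- Upward closure of a subset with respect to the natural partial order. -/
def upClosure [Mul S] (X : Set S) : Set S := {s | ∃ x ∈ X, nle x s}

end Defs

/-- An inverse semigroup: every element `a` has a unique inverse `a⁻¹`. -/
class InverseSemigroup (S : Type*) extends Semigroup S, Inv S where
  mul_inv_mul : ∀ a : S, a * a⁻¹ * a = a
  inv_mul_inv : ∀ a : S, a⁻¹ * a * a⁻¹ = a⁻¹
  inv_unique : ∀ a b : S, a * b * a = a → b * a * b = b → b = a⁻¹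

/-- An inverse monoid: an inverse semigroup with an identity. -/
class InverseMonoid (S : Type*) extends Monoid S, Inv S where
  mul_inv_mul : ∀ a : S, a * a⁻¹ * a = a
  inv_mul_inv : ∀ a : S, a⁻¹ * a * a⁻¹ = a⁻¹
  inv_unique : ∀ a b : S, a * b * a = a → b * a * b = b → b = a⁻¹

/-- A boolean inverse monoid: an inverse monoid with zero such that
(BM1) the idempotents form a boolean algebra under the natural partial order,
(BM2) the natural partial order is a meet semilattice, and
(BM3) orthogonal pairs of elements have joins. -/
class BooleanInverseMonoid (S : Type*) extends Monoid S, Inv S, Zero S where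
  zero_mul : ∀ a : S, 0 * a = 0
  mul_zero : ∀ a : S, a * 0 = 0
  mul_inv_mul : ∀ a : S, a * a⁻¹ * a = a
  inv_mul_inv : ∀ a : S, a⁻¹ * a * a⁻¹ = a⁻¹
  inv_unique : ∀ a b : S, a * b * a = a → b * a * b = b → b = a⁻¹
  meet_exists : ∀ s t : S, ∃ m : S, IsMeet s t m
  idem_join : ∀ e f : S, IsIdem e → IsIdem f → ∃ g : S, IsIdem g ∧ IsJoin e f g
  idem_compl : ∀ e : S, IsIdem e → ∃ e' : S, IsIdem e' ∧ e * e' = 0 ∧ IsJoin e e' 1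
  idem_distrib : ∀ e f g j : S, IsIdem e → IsIdem f → IsIdem g → IsJoin f g j →
    IsJoin (e * f) (e * g) (e * j)
  orthogonal_join : ∀ s t : S, s⁻¹ * t = 0 → s * t⁻¹ = 0 → ∃ j : S, IsJoin s t j

section Aux

variable {S : Type*} [InverseMonoid S]

private lemma IM.mii (a : S) : a * a⁻¹ * a = a := InverseMonoid.mul_inv_mul a
private lemma IM.imi (a : S) : a⁻¹ * a * a⁻¹ = a⁻¹ := InverseMonoid.inv_mul_inv a

private lemma IM.mii' (a y : S) : a * (a⁻¹ * (a * y)) = a * y := by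
  rw [← mul_assoc, ← mul_assoc, IM.mii]

private lemma IM.imi' (a y : S) : a⁻¹ * (a * (a⁻¹ * y)) = a⁻¹ * y := by
  rw [← mul_assoc, ← mul_assoc, IM.imi]

private lemma IM.mii'' (a : S) : a * (a⁻¹ * a) = a := by rw [← mul_assoc, IM.mii]
private lemma IM.imi'' (a : S) : a⁻¹ * (a * a⁻¹) = a⁻¹ := by rw [← mul_assoc, IM.imi]

private lemma IM.inv_inv (a : S) : a⁻¹⁻¹ = a :=
  (InverseMonoid.inv_unique a⁻¹ a (IM.imi a) (IM.mii a)).symm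

private lemma IM.idem_inv {e : S} (he : IsIdem e) : e⁻¹ = e :=
  (InverseMonoid.inv_unique e e (by rw [he, he]) (by rw [he, he])).symm

private lemma IM.idem' {e : S} (he : IsIdem e) (y : S) : e * (e * y) = e * y := by
  rw [← mul_assoc, he]

private lemma IM.idem_mm (a : S) : IsIdem (a * a⁻¹) := by
  unfold IsIdem; rw [mul_assoc, IM.mii']

private lemma IM.idem_im (a : S) : IsIdem (a⁻¹ * a) := by
  unfold IsIdem; rw [mul_assoc, IM.imi']

private lemma IM.idem_mul {e f : S} (he : IsIdem e) (hf : IsIdem f) :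
    IsIdem (e * f) := by
  set x := (e * f)⁻¹ with hx
  have hx2 : ∀ y : S, x * (e * (f * (x * y))) = x * y := by
    intro y
    have h := congrArg (· * y) (IM.imi (e * f))
    simp only [← hx, mul_assoc] at h
    exact h
  have key : f * x * e = x := by
    apply InverseMonoid.inv_unique
    · have hm := IM.mii (e * f)
      simp only [← hx, mul_assoc] at hm ⊢
      rw [IM.idem' hf, IM.idem' he]
      exact hm
    · simp only [mul_assoc]
      rw [IM.idem' he, IM.idem' hf, hx2 e]
  have hxi : IsIdem x := by
    unfold IsIdem
    conv_lhs => rw [← key]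
    simp only [mul_assoc]
    rw [hx2 e, ← mul_assoc]
    exact key
  have h2 : x⁻¹ = x := IM.idem_inv hxi
  rw [hx, IM.inv_inv] at h2
  rw [h2]
  exact hxi

private lemma IM.idem_comm {e f : S} (he : IsIdem e) (hf : IsIdem f) :
    e * f = f * e := by
  have hef := IM.idem_mul he hf
  have hfe := IM.idem_mul hf he
  have h1 : f * e = (e * f)⁻¹ := by
    apply InverseMonoid.inv_unique
    · have h := hef; unfold IsIdem at h
      simp only [mul_assoc] at h ⊢
      rw [IM.idem' hf, IM.idem' he]
      exact h
    · have h := hfe; unfold IsIdem at h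
      simp only [mul_assoc] at h ⊢
      rw [IM.idem' he, IM.idem' hf]
      exact h
  rw [h1, IM.idem_inv hef]

private lemma IM.idem_comm_mm {e : S} (he : IsIdem e) (b y : S) :
    e * (b * (b⁻¹ * y)) = b * (b⁻¹ * (e * y)) := by
  have h := congrArg (· * y) (IM.idem_comm he (IM.idem_mm b))
  simp only [mul_assoc] at h
  exact h

private lemma IM.idem_comm_im {e : S} (he : IsIdem e) (b y : S) :
    e * (b⁻¹ * (b * y)) = b⁻¹ * (b * (e * y)) := by
  have h := congrArg (· * y) (IM.idem_comm he (IM.idem_im b))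
  simp only [mul_assoc] at h
  exact h

private lemma IM.comm_im_mm (a b y : S) :
    a⁻¹ * (a * (b * (b⁻¹ * y))) = b * (b⁻¹ * (a⁻¹ * (a * y))) := by
  have h := congrArg (· * y) (IM.idem_comm (IM.idem_im a) (IM.idem_mm b))
  simp only [mul_assoc] at h
  exact h

private lemma IM.mul_inv_rev (a b : S) : (a * b)⁻¹ = b⁻¹ * a⁻¹ := by
  symm
  apply InverseMonoid.inv_unique
  · simp only [mul_assoc]
    rw [← IM.comm_im_mm a b b, IM.mii', IM.mii'']
  · simp only [mul_assoc]
    rw [IM.comm_im_mm a b a⁻¹, IM.imi', IM.imi'']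

private lemma IM.idem_tit {e : S} (t : S) (he : IsIdem e) :
    IsIdem (t⁻¹ * (e * t)) := by
  unfold IsIdem
  simp only [mul_assoc]
  rw [IM.idem_comm_mm he t (e * t), IM.idem' he, IM.imi']

private lemma IM.nle_trans {s t u : S} (h1 : nle s t) (h2 : nle t u) : nle s u := by
  obtain ⟨e, he, hse⟩ := h1
  obtain ⟨f, hf, htf⟩ := h2
  exact ⟨f * e, IM.idem_mul hf he, by rw [hse, htf, mul_assoc]⟩

private lemma IM.nle_mul {s t s' t' : S} (h1 : nle s t) (h2 : nle s' t') :
    nle (s * s') (t * t') := by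
  obtain ⟨e, he, hse⟩ := h1
  obtain ⟨f, hf, hsf⟩ := h2
  refine ⟨t'⁻¹ * (e * t') * f, IM.idem_mul (IM.idem_tit t' he) hf, ?_⟩
  rw [hse, hsf]
  simp only [mul_assoc]
  rw [← IM.idem_comm_mm he t' (t' * f), IM.mii']

private lemma IM.nle_inv {s t : S} (h : nle s t) : nle s⁻¹ t⁻¹ := by
  obtain ⟨e, he, hse⟩ := h
  refine ⟨t⁻¹⁻¹ * (e * t⁻¹), IM.idem_tit t⁻¹ he, ?_⟩
  rw [hse, IM.mul_inv_rev, IM.idem_inv he, IM.inv_inv,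
    ← IM.idem_comm_im he t t⁻¹, IM.imi'']

private lemma IM.nle_idem {u e : S} (he : IsIdem e) (h : nle u e) : IsIdem u := by
  obtain ⟨f, hf, huf⟩ := h
  rw [huf]; exact IM.idem_mul he hf

end Aux

theorem stmt12 {S : Type*} [InverseMonoid S] (F : Set S) (hF : IsFilter' F) :
    (∃ e ∈ F, IsIdem e) ↔
      ((∀ a ∈ F, ∀ b ∈ F, a * b ∈ F) ∧ ∀ a ∈ F, a⁻¹ ∈ F) := by
  obtain ⟨hne, hup, hdir⟩ := hF
  constructor
  · rintro ⟨e, heF, he⟩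
    have key : ∀ a ∈ F, ∃ u ∈ F, IsIdem u ∧ nle u a := by
      intro a haF
      obtain ⟨u, huF, hua, hue⟩ := hdir a e haF heF
      exact ⟨u, huF, IM.nle_idem he hue, hua⟩
    constructor
    · intro a haF b hbF
      obtain ⟨u, huF, hui, hua⟩ := key a haF
      obtain ⟨w, hwF, hwu, hwb⟩ := hdir u b huF hbF
      have hwa : nle w a := IM.nle_trans hwu hua
      have hwi : IsIdem w := IM.nle_idem hui hwu
      have hwab : nle w (a * b) := by
        have h := IM.nle_mul hwa hwb
        rwa [show w * w = w from hwi] at h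
      exact hup w (a * b) hwF hwab
    · intro a haF
      obtain ⟨u, huF, hui, hua⟩ := key a haF
      have h1 : nle u⁻¹ a⁻¹ := IM.nle_inv hua
      rw [IM.idem_inv hui] at h1
      exact hup u a⁻¹ huF h1
  · rintro ⟨hmul, hinv⟩
    obtain ⟨a, haF⟩ := hne
    exact ⟨a * a⁻¹, hmul a haF a⁻¹ (hinv a haF), IM.idem_mm a⟩
end

section
/- Let A and B be filters in a boolean inverse monoid with A ∩ B ≠ ∅ and (A⁻¹A)↑ = (B⁻¹B)↑. Then A = B. -/
namespace BIMAux

variable {S : Type*} [BooleanInverseMonoid S]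

lemma mim (a : S) : a * a⁻¹ * a = a := BooleanInverseMonoid.mul_inv_mul a
lemma imi (a : S) : a⁻¹ * a * a⁻¹ = a⁻¹ := BooleanInverseMonoid.inv_mul_inv a

lemma inv_inv' (a : S) : a⁻¹⁻¹ = a :=
  (BooleanInverseMonoid.inv_unique a⁻¹ a (imi a) (mim a)).symm

lemma idem_inv {e : S} (he : IsIdem e) : e⁻¹ = e :=
  (BooleanInverseMonoid.inv_unique e e (by rw [he, he]) (by rw [he, he])).symm

lemma idem_mul {e f : S} (he : IsIdem e) (hf : IsIdem f) : IsIdem (e * f) := by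
  set x := (e * f)⁻¹ with hxdef
  have h1 : (e * f) * x * (e * f) = e * f := mim _
  have h2 : x * (e * f) * x = x := imi _
  have c1 : (e * f) * (f * x * e) * (e * f) = e * f := by
    calc (e * f) * (f * x * e) * (e * f)
        = (e * (f * f)) * x * ((e * e) * f) := by simp [mul_assoc]
      _ = (e * f) * x * (e * f) := by rw [hf, he]
      _ = e * f := h1
  have c2 : (f * x * e) * (e * f) * (f * x * e) = f * x * e := by
    calc (f * x * e) * (e * f) * (f * x * e)
        = f * x * (e * e) * (f * f) * x * e := by simp [mul_assoc]
      _ = f * (x * (e * f) * x) * e := by rw [he, hf]; simp [mul_assoc]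
      _ = f * x * e := by rw [h2]
  have hx : f * x * e = x := BooleanInverseMonoid.inv_unique (e * f) (f * x * e) c1 c2
  have hxi : IsIdem x := by
    calc x * x = (f * x * e) * (f * x * e) := by rw [hx]
      _ = f * (x * (e * f) * x) * e := by simp [mul_assoc]
      _ = f * x * e := by rw [h2]
      _ = x := hx
  have : e * f = x := by rw [← inv_inv' (e * f), ← hxdef, idem_inv hxi]
  rw [this]; exact hxi

lemma idem_comm {e f : S} (he : IsIdem e) (hf : IsIdem f) : e * f = f * e := by
  have hef := idem_mul he hf
  have hfe := idem_mul hf he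
  have c1 : (e * f) * (f * e) * (e * f) = e * f := by
    calc (e * f) * (f * e) * (e * f)
        = e * (f * f) * (e * e) * f := by simp [mul_assoc]
      _ = (e * f) * (e * f) := by rw [hf, he]; simp [mul_assoc]
      _ = e * f := hef
  have c2 : (f * e) * (e * f) * (f * e) = f * e := by
    calc (f * e) * (e * f) * (f * e)
        = f * (e * e) * (f * f) * e := by simp [mul_assoc]
      _ = (f * e) * (f * e) := by rw [he, hf]; simp [mul_assoc]
      _ = f * e := hfe
  have := BooleanInverseMonoid.inv_unique (e * f) (f * e) c1 c2
  rw [idem_inv hef] at this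
  exact this.symm

lemma idem_ii (a : S) : IsIdem (a⁻¹ * a) := by
  show a⁻¹ * a * (a⁻¹ * a) = a⁻¹ * a
  calc a⁻¹ * a * (a⁻¹ * a) = a⁻¹ * (a * a⁻¹ * a) := by simp [mul_assoc]
    _ = a⁻¹ * a := by rw [mim]

lemma idem_ii' (a : S) : IsIdem (a * a⁻¹) := by
  show a * a⁻¹ * (a * a⁻¹) = a * a⁻¹
  calc a * a⁻¹ * (a * a⁻¹) = a * (a⁻¹ * a * a⁻¹) := by simp [mul_assoc]
    _ = a * a⁻¹ := by rw [imi]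

lemma mul_inv' (a b : S) : (a * b)⁻¹ = b⁻¹ * a⁻¹ := by
  have c1 : (a * b) * (b⁻¹ * a⁻¹) * (a * b) = a * b := by
    calc (a * b) * (b⁻¹ * a⁻¹) * (a * b)
        = a * ((b * b⁻¹) * (a⁻¹ * a)) * b := by simp [mul_assoc]
      _ = a * ((a⁻¹ * a) * (b * b⁻¹)) * b := by rw [idem_comm (idem_ii' b) (idem_ii a)]
      _ = (a * a⁻¹ * a) * (b * b⁻¹ * b) := by simp [mul_assoc]
      _ = a * b := by rw [mim, mim]
  have c2 : (b⁻¹ * a⁻¹) * (a * b) * (b⁻¹ * a⁻¹) = b⁻¹ * a⁻¹ := by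
    calc (b⁻¹ * a⁻¹) * (a * b) * (b⁻¹ * a⁻¹)
        = b⁻¹ * ((a⁻¹ * a) * (b * b⁻¹)) * a⁻¹ := by simp [mul_assoc]
      _ = b⁻¹ * ((b * b⁻¹) * (a⁻¹ * a)) * a⁻¹ := by rw [idem_comm (idem_ii a) (idem_ii' b)]
      _ = (b⁻¹ * b * b⁻¹) * (a⁻¹ * a * a⁻¹) := by simp [mul_assoc]
      _ = b⁻¹ * a⁻¹ := by rw [imi, imi]
  exact (BooleanInverseMonoid.inv_unique (a * b) (b⁻¹ * a⁻¹) c1 c2).symm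

lemma nle_refl (a : S) : nle a a :=
  ⟨a⁻¹ * a, idem_ii a, by rw [← mul_assoc, mim]⟩

lemma nle_trans {s t u : S} (h1 : nle s t) (h2 : nle t u) : nle s u := by
  obtain ⟨e, he, rfl⟩ := h1
  obtain ⟨f, hf, rfl⟩ := h2
  exact ⟨f * e, idem_mul hf he, by rw [mul_assoc]⟩

lemma nle_of_left {s t : S} (f : S) (hf : IsIdem f) (h : s = f * t) : nle s t := by
  refine ⟨t⁻¹ * f * t, ?_, ?_⟩
  · show t⁻¹ * f * t * (t⁻¹ * f * t) = t⁻¹ * f * t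
    calc t⁻¹ * f * t * (t⁻¹ * f * t)
        = t⁻¹ * (f * (t * t⁻¹)) * (f * t) := by simp [mul_assoc]
      _ = t⁻¹ * ((t * t⁻¹) * f) * (f * t) := by rw [idem_comm hf (idem_ii' t)]
      _ = (t⁻¹ * t * t⁻¹) * (f * f) * t := by simp [mul_assoc]
      _ = t⁻¹ * f * t := by rw [imi, hf]
  · calc s = f * t := h
      _ = f * (t * t⁻¹ * t) := by rw [mim]
      _ = (f * (t * t⁻¹)) * t := by simp [mul_assoc]
      _ = ((t * t⁻¹) * f) * t := by rw [idem_comm hf (idem_ii' t)]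
      _ = t * (t⁻¹ * f * t) := by simp [mul_assoc]

lemma left_of_nle {s t : S} (h : nle s t) : ∃ f : S, IsIdem f ∧ s = f * t := by
  obtain ⟨e, he, rfl⟩ := h
  refine ⟨t * e * t⁻¹, ?_, ?_⟩
  · show t * e * t⁻¹ * (t * e * t⁻¹) = t * e * t⁻¹
    calc t * e * t⁻¹ * (t * e * t⁻¹)
        = t * (e * (t⁻¹ * t)) * (e * t⁻¹) := by simp [mul_assoc]
      _ = t * ((t⁻¹ * t) * e) * (e * t⁻¹) := by rw [idem_comm he (idem_ii t)]
      _ = (t * t⁻¹ * t) * ((e * e) * t⁻¹) := by simp [mul_assoc]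
      _ = t * e * t⁻¹ := by rw [mim, he, ← mul_assoc]
  · calc t * e = (t * t⁻¹ * t) * e := by rw [mim]
      _ = t * (t⁻¹ * t * e) := by simp [mul_assoc]
      _ = t * (e * (t⁻¹ * t)) := by rw [idem_comm (idem_ii t) he]
      _ = t * e * t⁻¹ * t := by simp [mul_assoc]

lemma nle_mul_right {s t : S} (u : S) (h : nle s t) : nle (s * u) (t * u) := by
  obtain ⟨e, he, rfl⟩ := h
  refine ⟨u⁻¹ * e * u, ?_, ?_⟩
  · show u⁻¹ * e * u * (u⁻¹ * e * u) = u⁻¹ * e * u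
    calc u⁻¹ * e * u * (u⁻¹ * e * u)
        = u⁻¹ * (e * (u * u⁻¹)) * (e * u) := by simp [mul_assoc]
      _ = u⁻¹ * ((u * u⁻¹) * e) * (e * u) := by rw [idem_comm he (idem_ii' u)]
      _ = (u⁻¹ * u * u⁻¹) * ((e * e) * u) := by simp [mul_assoc]
      _ = u⁻¹ * e * u := by rw [imi, he, ← mul_assoc]
  · calc t * e * u = t * e * (u * u⁻¹ * u) := by rw [mim]
      _ = t * (e * (u * u⁻¹)) * u := by simp [mul_assoc]
      _ = t * ((u * u⁻¹) * e) * u := by rw [idem_comm he (idem_ii' u)]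
      _ = t * u * (u⁻¹ * e * u) := by simp [mul_assoc]

lemma nle_mul_left {u v : S} (s : S) (h : nle u v) : nle (s * u) (s * v) := by
  obtain ⟨e, he, rfl⟩ := h
  exact ⟨e, he, by rw [mul_assoc]⟩

lemma nle_mul {s t u v : S} (h1 : nle s t) (h2 : nle u v) : nle (s * u) (t * v) :=
  nle_trans (nle_mul_right u h1) (nle_mul_left t h2)

lemma nle_inv {s t : S} (h : nle s t) : nle s⁻¹ t⁻¹ := by
  obtain ⟨e, he, rfl⟩ := h
  exact nle_of_left e he (by rw [mul_inv', idem_inv he])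

lemma absorb {c x : S} (h : nle c x) : x * (c⁻¹ * c) = c := by
  obtain ⟨e, he, rfl⟩ := h
  calc x * ((x * e)⁻¹ * (x * e))
      = x * (e * (x⁻¹ * x) * e) := by rw [mul_inv', idem_inv he]; simp [mul_assoc]
    _ = x * ((x⁻¹ * x) * e * e) := by rw [idem_comm he (idem_ii x)]
    _ = (x * x⁻¹ * x) * (e * e) := by simp [mul_assoc]
    _ = x * e := by rw [mim, he]

open Pointwise in
lemma subset_of (A B : Set S) (hA : IsFilter' A) (hB : IsFilter' B)
    (x : S) (hxA : x ∈ A) (hxB : x ∈ B)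
    (h : upClosure (A⁻¹ * A) ⊆ upClosure (B⁻¹ * B)) : A ⊆ B := by
  intro a ha
  obtain ⟨-, hAup, hAdir⟩ := hA
  obtain ⟨-, hBup, hBdir⟩ := hB
  obtain ⟨c, hcA, hca, hcx⟩ := hAdir a x ha hxA
  have hcc : c⁻¹ * c ∈ upClosure (A⁻¹ * A) :=
    ⟨c⁻¹ * c, Set.mul_mem_mul (by simpa [Set.mem_inv, inv_inv'] using hcA) hcA, nle_refl _⟩
  obtain ⟨y, hy, hyc⟩ := h hcc
  obtain ⟨p, hp, b2, hb2, rfl⟩ := hy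
  have hpB : p⁻¹ ∈ B := hp
  obtain ⟨d, hdB, hdx, hdp⟩ := hBdir x p⁻¹ hxB hpB
  obtain ⟨d', hd'B, hd'd, hd'b2⟩ := hBdir d b2 hdB hb2
  have hd'x : nle d' x := nle_trans hd'd hdx
  have hd'p : nle d'⁻¹ p := by
    have := nle_inv (nle_trans hd'd hdp)
    rwa [inv_inv'] at this
  have key : nle d' (x * (p * b2)) := by
    have h1 : nle (d' * d'⁻¹ * d') (x * p * b2) :=
      nle_mul (nle_mul hd'x hd'p) hd'b2
    rwa [mim, mul_assoc] at h1
  have hxyB : x * (p * b2) ∈ B := hBup d' _ hd'B key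
  have hxya : nle (x * (p * b2)) a := by
    have h2 : nle (x * (p * b2)) (x * (c⁻¹ * c)) := nle_mul_left x hyc
    rw [absorb hcx] at h2
    exact nle_trans h2 hca
  exact hBup _ a hxyB hxya

end BIMAux

open Pointwise in
theorem stmt13 {S : Type*} [BooleanInverseMonoid S] (A B : Set S)
    (hA : IsFilter' A) (hB : IsFilter' B) (hne : (A ∩ B).Nonempty)
    (h : upClosure (A⁻¹ * A) = upClosure (B⁻¹ * B)) : A = B := by
  obtain ⟨x, hxA, hxB⟩ := hne
  exact Set.Subset.antisymm
    (BIMAux.subset_of A B hA hB x hxA hxB h.subset)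
    (BIMAux.subset_of B A hB hA x hxB hxA h.symm.subset)
end
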